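/- Let E be a finite-dimensional vector space over a field K equipped with a nondegenerate alternating bilinear form ω, and let L₀ and L₁ be lagrangian subspaces of E that are complementary (L₀ ∩ L₁ = 0 and L₀ + L₁ = E). For a linear map f : L₁ → L₀, let Γ_f = {x + f x : x ∈ L₁} ≤ E be its graph. Then Γ_f is a lagrangian subspace of E if and only if the bilinear form (x, y) ↦ ω(f x, y) on L₁ is symmetric. -/

import Mathlib

/-- The `ω`-orthogonal complement of a subspace `L`:
`L^⊥ = {x ∈ E : ω x y = 0 for all y ∈ L}`. -/
def sympOrtho {K E : Type*} [Field K] [AddCommGroup E] [Module K E]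
    (ω : LinearMap.BilinForm K E) (L : Submodule K E) : Submodule K E where
  carrier := {x | ∀ y ∈ L, ω x y = 0}
  add_mem' := by
    intro a b ha hb y hy
    simp [map_add, ha y hy, hb y hy]
  zero_mem' := by
    intro y hy
    simp
  smul_mem' := by
    intro c a ha y hy
    simp [map_smul, ha y hy]

lemma sympOrtho_eq_orthogonal {K E : Type*} [Field K] [AddCommGroup E] [Module K E]
    {ω : LinearMap.BilinForm K E} (hr : ω.IsRefl) (L : Submodule K E) :
    sympOrtho ω L = ω.orthogonal L := by
  ext x
  constructor
  · intro hx n hn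
    exact hr _ _ (hx n hn)
  · intro hx y hy
    exact hr _ _ (hx y hy)

/-- Let `L₀, L₁` be complementary lagrangian subspaces of a finite-dimensional
symplectic vector space and `f : L₁ → L₀` linear.  The graph
`Γ_f = {x + f x : x ∈ L₁}` is lagrangian iff `(x, y) ↦ ω (f x) y` is a
symmetric bilinear form on `L₁`. -/
theorem graph_lagrangian_iff_symmetric
    {K E : Type*} [Field K] [AddCommGroup E] [Module K E] [FiniteDimensional K E]
    (ω : LinearMap.BilinForm K E) (halt : ω.IsAlt) (hnd : ω.Nondegenerate)
    (L₀ L₁ : Submodule K E) (hL₀ : L₀ = sympOrtho ω L₀) (hL₁ : L₁ = sympOrtho ω L₁)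
    (hmeet : L₀ ⊓ L₁ = ⊥) (hjoin : L₀ ⊔ L₁ = ⊤)
    (f : L₁ →ₗ[K] L₀) :
    LinearMap.range (L₁.subtype + L₀.subtype ∘ₗ f) =
        sympOrtho ω (LinearMap.range (L₁.subtype + L₀.subtype ∘ₗ f)) ↔
      ∀ x y : L₁, ω (f x) y = ω (f y) x := by
  have hrefl : ω.IsRefl := halt.isRefl
  set T := L₁.subtype + L₀.subtype ∘ₗ f with hT
  have hTapp : ∀ x : L₁, T x = (x : E) + (f x : E) := fun x => rfl
  have hL1z : ∀ x y : L₁, ω (x : E) (y : E) = 0 := by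
    intro x y
    have hx : (x : E) ∈ sympOrtho ω L₁ := by rw [← hL₁]; exact x.2
    exact hx (y : E) y.2
  have hL0z : ∀ x y : L₀, ω (x : E) (y : E) = 0 := by
    intro x y
    have hx : (x : E) ∈ sympOrtho ω L₀ := by rw [← hL₀]; exact x.2
    exact hx (y : E) y.2
  have key : ∀ x y : L₁, ω (T x) (T y) = ω (f x : E) (y : E) - ω (f y : E) (x : E) := by
    intro x y
    rw [hTapp, hTapp]
    simp only [map_add, LinearMap.add_apply]
    rw [hL1z x y, hL0z (f x) (f y), ← LinearMap.IsAlt.neg halt (f y : E) (x : E)]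
    ring
  constructor
  · intro h x y
    have hx : T x ∈ sympOrtho ω (LinearMap.range T) := h ▸ LinearMap.mem_range_self T x
    have h0 : ω (T x) (T y) = 0 := hx (T y) (LinearMap.mem_range_self T y)
    rw [key] at h0
    exact sub_eq_zero.mp h0
  · intro hsym
    -- injectivity of T
    have hinj : Function.Injective T := by
      rw [← LinearMap.ker_eq_bot]
      ext x
      simp only [Submodule.mem_bot, LinearMap.mem_ker, hTapp]
      constructor
      · intro hx
        have hxL0 : (x : E) ∈ L₀ := by
          have : (x : E) = -(f x : E) := by
            rw [eq_neg_iff_add_eq_zero]; exact hx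
          rw [this]
          exact neg_mem (f x).2
        have : (x : E) ∈ L₀ ⊓ L₁ := ⟨hxL0, x.2⟩
        rw [hmeet] at this
        exact Subtype.ext this
      · rintro rfl; simp
    -- Γ ⊆ Γ^⊥
    have hle : LinearMap.range T ≤ sympOrtho ω (LinearMap.range T) := by
      rintro _ ⟨x, rfl⟩ _ ⟨y, rfl⟩
      rw [key, hsym, sub_self]
    -- dimension counting
    have hdimL1 : 2 * Module.finrank K L₁ = Module.finrank K E := by
      have h1 : Module.finrank K (ω.orthogonal L₁) =
          Module.finrank K E - Module.finrank K L₁ :=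
        LinearMap.BilinForm.finrank_orthogonal hnd L₁
      have h2 : (ω.orthogonal L₁ : Submodule K E) = L₁ := by
        rw [← sympOrtho_eq_orthogonal hrefl, ← hL₁]
      rw [h2] at h1
      have h3 : Module.finrank K L₁ ≤ Module.finrank K E := Submodule.finrank_le L₁
      omega
    have hdimG : Module.finrank K (LinearMap.range T) = Module.finrank K L₁ :=
      LinearMap.finrank_range_of_inj hinj
    have hdimO : Module.finrank K (sympOrtho ω (LinearMap.range T)) =
        Module.finrank K (LinearMap.range T) := by
      rw [sympOrtho_eq_orthogonal hrefl,
        LinearMap.BilinForm.finrank_orthogonal hnd, hdimG]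
      omega
    exact Submodule.eq_of_le_of_finrank_le hle (le_of_eq hdimO)
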